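/- arXiv:1509.07764 — 8 statements merged into one kernel-verified Lean document; each statement's English description precedes it below -/
import Mathlib

section
/- Let μ₁, μ₂ ∈ ℂ and set τ = μ₁² − μ₂². Consider 3×3 complex matrices depending on parameters x, a, b, c, y, z ∈ ℂ: S with rows (0, x, 0), (1, 0, 0), (0, 1, μ₁+μ₂), and Y with rows (a, b, 0), (c, −a, 0), (y, z, (μ₁−μ₂)/2). Then S·Y + Y·S = τ·I and (Y − S/2)² = μ₂²·I hold if and only if b = τ − c·x, c = −(μ₁+μ₂)·y − z, a = (μ₁+μ₂)·z + y·x + (μ₁−μ₂)/2, and y²·x − z² + 1/4 + (μ₁−μ₂)·y = 0. In particular, the map (S,Y) ↦ (y, z, x) is a bijection from the set of such solutions onto the surface {(y,z,x) ∈ ℂ³ : y²·x − z² + 1/4 + (μ₁−μ₂)·y = 0}. -/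
/-!
The anticommutator equation `S Y + Y S = (μ₁² - μ₂²) I` is linear in the entries of `Y` and
solves for `a`, `b`, `c` in terms of `(y, z, x)`. Substituting this solution, a direct computation
gives `(Y - S/2)² - μ₂² I = F(y, z, x) • M`, where `F` is the defining polynomial of the
`D₁`-surface and `M` is a matrix with an entry equal to `1`. Hence the second equation is exactly
`F = 0`, and `(y, z, x) ↦ (S, Y)` is an inverse of the projection.
-/

open Matrix

noncomputable section

namespace GL3Slice

variable (μ₁ μ₂ : ℂ)

def S (x : ℂ) : Matrix (Fin 3) (Fin 3) ℂ := !![0, x, 0; 1, 0, 0; 0, 1, μ₁ + μ₂]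

def Y (a b c y z : ℂ) : Matrix (Fin 3) (Fin 3) ℂ := !![a, b, 0; c, -a, 0; y, z, (μ₁ - μ₂) / 2]

def d1Equation (y z x : ℂ) : ℂ := y ^ 2 * x - z ^ 2 + 1 / 4 + (μ₁ - μ₂) * y

def sliceY (y z x : ℂ) : Matrix (Fin 3) (Fin 3) ℂ :=
  Y μ₁ μ₂ ((μ₁ + μ₂) * z + y * x + (μ₁ - μ₂) / 2) ((μ₁ ^ 2 - μ₂ ^ 2) - (-(μ₁ + μ₂) * y - z) * x)
    (-(μ₁ + μ₂) * y - z) y z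

def slicePoint (p : ℂ × ℂ × ℂ) : Matrix (Fin 3) (Fin 3) ℂ × Matrix (Fin 3) (Fin 3) ℂ :=
  (S μ₁ μ₂ p.2.2, sliceY μ₁ μ₂ p.1 p.2.1 p.2.2)

variable {μ₁ μ₂}

theorem S_mul_Y_add_Y_mul_S (x a b c y z : ℂ) :
    S μ₁ μ₂ x * Y μ₁ μ₂ a b c y z + Y μ₁ μ₂ a b c y z * S μ₁ μ₂ x =
      !![x * c + b, 0, 0;
         0, b + c * x, 0;
         c + (μ₁ + μ₂) * y + z, -a + (μ₁ + μ₂) * z + y * x + (μ₁ - μ₂) / 2, μ₁ ^ 2 - μ₂ ^ 2] := by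
  ext i j
  fin_cases i <;> fin_cases j <;> simp [S, Y] <;> ring

theorem anticomm_eq_smul_one_iff (x a b c y z : ℂ) :
    S μ₁ μ₂ x * Y μ₁ μ₂ a b c y z + Y μ₁ μ₂ a b c y z * S μ₁ μ₂ x = (μ₁ ^ 2 - μ₂ ^ 2) • 1 ↔
      b = (μ₁ ^ 2 - μ₂ ^ 2) - c * x ∧ c = -(μ₁ + μ₂) * y - z ∧
        a = (μ₁ + μ₂) * z + y * x + (μ₁ - μ₂) / 2 := by
  rw [S_mul_Y_add_Y_mul_S, one_fin_three]
  simp only [smul_of, smul_cons, smul_eq_mul, mul_one, mul_zero, smul_empty,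
    EmbeddingLike.apply_eq_iff_eq, vecCons_inj, and_true, true_and]
  constructor
  · rintro ⟨h₀₀, -, h₂₀, h₂₁⟩
    exact ⟨by linear_combination h₀₀, by linear_combination h₂₀, by linear_combination -h₂₁⟩
  · rintro ⟨hb, hc, ha⟩
    exact ⟨by linear_combination hb, by linear_combination hb, by linear_combination hc,
      by linear_combination -ha⟩

theorem sq_sliceY_sub_half_S (x y z : ℂ) :
    (sliceY μ₁ μ₂ y z x - (1 / 2 : ℂ) • S μ₁ μ₂ x) ^ 2 =
      μ₂ ^ 2 • 1 + d1Equation μ₁ μ₂ y z x •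
        !![x - (μ₁ + μ₂) ^ 2, 0, 0; 0, x - (μ₁ + μ₂) ^ 2, 0; 1, μ₁ + μ₂, 0] := by
  ext i j
  fin_cases i <;> fin_cases j <;> simp [sliceY, S, Y, d1Equation, sq] <;> ring

theorem sq_sliceY_sub_half_S_eq_iff (x y z : ℂ) :
    (sliceY μ₁ μ₂ y z x - (1 / 2 : ℂ) • S μ₁ μ₂ x) ^ 2 = μ₂ ^ 2 • 1 ↔ d1Equation μ₁ μ₂ y z x = 0 := by
  rw [sq_sliceY_sub_half_S, add_eq_left, smul_eq_zero, or_iff_left]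
  intro h
  simpa using congrFun₂ h 2 0

theorem slice_equations_iff (x a b c y z : ℂ) :
    (S μ₁ μ₂ x * Y μ₁ μ₂ a b c y z + Y μ₁ μ₂ a b c y z * S μ₁ μ₂ x = (μ₁ ^ 2 - μ₂ ^ 2) • 1 ∧
        (Y μ₁ μ₂ a b c y z - (1 / 2 : ℂ) • S μ₁ μ₂ x) ^ 2 = μ₂ ^ 2 • 1) ↔
      b = (μ₁ ^ 2 - μ₂ ^ 2) - c * x ∧ c = -(μ₁ + μ₂) * y - z ∧
        a = (μ₁ + μ₂) * z + y * x + (μ₁ - μ₂) / 2 ∧ d1Equation μ₁ μ₂ y z x = 0 := by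
  rw [anticomm_eq_smul_one_iff]
  constructor
  · rintro ⟨⟨rfl, rfl, rfl⟩, h⟩
    exact ⟨rfl, rfl, rfl, (sq_sliceY_sub_half_S_eq_iff x y z).1 h⟩
  · rintro ⟨rfl, rfl, rfl, h⟩
    exact ⟨⟨rfl, rfl, rfl⟩, (sq_sliceY_sub_half_S_eq_iff x y z).2 h⟩

end GL3Slice

end

open GL3Slice in
/-- For 3×3 matrices `S = !![0,x,0; 1,0,0; 0,1,μ₁+μ₂]` and
`Y = !![a,b,0; c,-a,0; y,z,(μ₁-μ₂)/2]`, the equations `S·Y + Y·S = (μ₁²-μ₂²)·I` and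
`(Y - S/2)² = μ₂²·I` hold iff `b = τ - c·x`, `c = -(μ₁+μ₂)·y - z`,
`a = (μ₁+μ₂)·z + y·x + (μ₁-μ₂)/2` and `y²·x - z² + 1/4 + (μ₁-μ₂)·y = 0`; moreover
`(S,Y) ↦ (y,z,x)` is a bijection from the solution set onto the `D₁`-surface. -/
theorem slice_GL3_is_D1_surface (μ₁ μ₂ : ℂ) :
    (∀ x a b c y z : ℂ,
      ((!![0, x, 0; 1, 0, 0; 0, 1, μ₁ + μ₂] : Matrix (Fin 3) (Fin 3) ℂ)
            * !![a, b, 0; c, -a, 0; y, z, (μ₁ - μ₂)/2]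
          + !![a, b, 0; c, -a, 0; y, z, (μ₁ - μ₂)/2] * !![0, x, 0; 1, 0, 0; 0, 1, μ₁ + μ₂]
          = (μ₁^2 - μ₂^2) • (1 : Matrix (Fin 3) (Fin 3) ℂ) ∧
        ((!![a, b, 0; c, -a, 0; y, z, (μ₁ - μ₂)/2] : Matrix (Fin 3) (Fin 3) ℂ)
            - (1/2 : ℂ) • !![0, x, 0; 1, 0, 0; 0, 1, μ₁ + μ₂]) ^ 2
          = μ₂^2 • (1 : Matrix (Fin 3) (Fin 3) ℂ))
      ↔ (b = (μ₁^2 - μ₂^2) - c * x ∧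
          c = -(μ₁ + μ₂) * y - z ∧
          a = (μ₁ + μ₂) * z + y * x + (μ₁ - μ₂)/2 ∧
          y^2 * x - z^2 + 1/4 + (μ₁ - μ₂) * y = 0)) ∧
    Set.BijOn
      (fun P : Matrix (Fin 3) (Fin 3) ℂ × Matrix (Fin 3) (Fin 3) ℂ =>
        (P.2 2 0, P.2 2 1, P.1 0 1))
      {P : Matrix (Fin 3) (Fin 3) ℂ × Matrix (Fin 3) (Fin 3) ℂ |
        (∃ x a b c y z : ℂ, P.1 = !![0, x, 0; 1, 0, 0; 0, 1, μ₁ + μ₂] ∧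
          P.2 = !![a, b, 0; c, -a, 0; y, z, (μ₁ - μ₂)/2]) ∧
        P.1 * P.2 + P.2 * P.1 = (μ₁^2 - μ₂^2) • 1 ∧
        (P.2 - (1/2 : ℂ) • P.1) ^ 2 = μ₂^2 • 1}
      {p : ℂ × ℂ × ℂ |
        p.1^2 * p.2.2 - p.2.1^2 + 1/4 + (μ₁ - μ₂) * p.1 = 0} := by
  refine ⟨slice_equations_iff, Set.InvOn.bijOn (f' := slicePoint μ₁ μ₂) ⟨?_, ?_⟩ ?_ ?_⟩
  · rintro ⟨_, _⟩ ⟨⟨x, a, b, c, y, z, rfl, rfl⟩, h⟩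
    obtain ⟨rfl, rfl, rfl, -⟩ := (slice_equations_iff x a b c y z).1 h
    rfl
  · rintro ⟨y, z, x⟩ -
    rfl
  · rintro ⟨_, _⟩ ⟨⟨x, a, b, c, y, z, rfl, rfl⟩, h⟩
    exact ((slice_equations_iff x a b c y z).1 h).2.2.2
  · rintro ⟨y, z, x⟩ h
    exact ⟨⟨x, _, _, _, y, z, rfl, rfl⟩, (slice_equations_iff x _ _ _ y z).2 ⟨rfl, rfl, rfl, h⟩⟩
end

section
/- Let μ₁, μ₂ ∈ ℂ and set τ = μ₁² − μ₂². Consider 2×2 complex matrices S = [[0, x],[1, 0]] and Y = [[a, b],[c, −a]] with x, a, b, c ∈ ℂ. Then S·Y + Y·S = τ·I and (Y − S/2)² = μ₂²·I hold if and only if b = τ − c·x and a² − x·c² + x/4 + (μ₁²−μ₂²)·c − (μ₁²+μ₂²)/2 = 0. In particular, the map (S,Y) ↦ (a, c, x) is a bijection from the set of such solutions onto the surface {(a,c,x) ∈ ℂ³ : a² − x·c² + x/4 + (μ₁²−μ₂²)·c − (μ₁²+μ₂²)/2 = 0}. -/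
/-!
`S·Y + Y·S = (b + c·x)·I`, and since `Y - S/2 = !![a, b - x/2; c - 1/2, -a]` is traceless,
Cayley–Hamilton gives `(Y - S/2)² = (a² + (b - x/2)(c - 1/2))·I`. So the two matrix equations
say `b + c·x = τ` and `a² + (b - x/2)(c - 1/2) = μ₂²`; eliminating `b` with the first leaves the
surface equation, and `b` is recovered from `(a, c, x)`, which makes `(S, Y) ↦ (a, c, x)` bijective.
-/

open Matrix

section TwoByTwo

variable {R : Type*} [CommRing R]

theorem smul_one_inj_of_nonempty {n : Type*} [Fintype n] [DecidableEq n] [Nonempty n] {r s : R} :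
    r • (1 : Matrix n n R) = s • 1 ↔ r = s := by
  simpa only [← smul_one_eq_diagonal, scalar_apply] using scalar_inj

theorem companion_mul_add_mul_companion (x a b c : R) :
    !![0, x; 1, 0] * !![a, b; c, -a] + !![a, b; c, -a] * !![0, x; 1, 0] =
      (b + c * x) • (1 : Matrix (Fin 2) (Fin 2) R) := by
  ext i j
  fin_cases i <;> fin_cases j <;> simp <;> ring

theorem traceless_fin_two_sq (a b c : R) :
    !![a, b; c, -a] ^ 2 = (a ^ 2 + b * c) • (1 : Matrix (Fin 2) (Fin 2) R) := by
  ext i j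
  fin_cases i <;> fin_cases j <;> simp [sq, Matrix.mul_apply] <;> ring

theorem sub_half_smul_companion {K : Type*} [Field K] (x a b c : K) :
    !![a, b; c, -a] - (1 / 2 : K) • !![0, x; 1, 0] = !![a, b - x / 2; c - 1 / 2, -a] := by
  ext i j
  fin_cases i <;> fin_cases j <;> simp [div_eq_inv_mul]

end TwoByTwo

section Slice

variable {K : Type*} [Field K] [CharZero K]

theorem slice_equations_iff (μ₁ μ₂ x a b c : K) :
    (!![0, x; 1, 0] * !![a, b; c, -a] + !![a, b; c, -a] * !![0, x; 1, 0] =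
        (μ₁ ^ 2 - μ₂ ^ 2) • (1 : Matrix (Fin 2) (Fin 2) K) ∧
      (!![a, b; c, -a] - (1 / 2 : K) • !![0, x; 1, 0]) ^ 2 = μ₂ ^ 2 • (1 : Matrix (Fin 2) (Fin 2) K))
    ↔ (b = (μ₁ ^ 2 - μ₂ ^ 2) - c * x ∧
        a ^ 2 - x * c ^ 2 + x / 4 + (μ₁ ^ 2 - μ₂ ^ 2) * c - (μ₁ ^ 2 + μ₂ ^ 2) / 2 = 0) := by
  rw [companion_mul_add_mul_companion, sub_half_smul_companion, traceless_fin_two_sq,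
    smul_one_inj_of_nonempty, smul_one_inj_of_nonempty]
  constructor
  · rintro ⟨hb, hdet⟩
    exact ⟨by linear_combination hb, by linear_combination hdet - (c - 1 / 2) * hb⟩
  · rintro ⟨hb, hsurf⟩
    exact ⟨by linear_combination hb, by linear_combination hsurf + (c - 1 / 2) * hb⟩

def sliceOfSurfacePoint (μ₁ μ₂ : K) (p : K × K × K) : Matrix (Fin 2) (Fin 2) K × Matrix (Fin 2) (Fin 2) K :=
  (!![0, p.2.2; 1, 0], !![p.1, (μ₁ ^ 2 - μ₂ ^ 2) - p.2.1 * p.2.2; p.2.1, -p.1])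

theorem slice_bijOn_surface (μ₁ μ₂ : K) :
    Set.BijOn
      (fun P : Matrix (Fin 2) (Fin 2) K × Matrix (Fin 2) (Fin 2) K =>
        (P.2 0 0, P.2 1 0, P.1 0 1))
      {P : Matrix (Fin 2) (Fin 2) K × Matrix (Fin 2) (Fin 2) K |
        (∃ x a b c : K, P.1 = !![0, x; 1, 0] ∧ P.2 = !![a, b; c, -a]) ∧
        P.1 * P.2 + P.2 * P.1 = (μ₁ ^ 2 - μ₂ ^ 2) • 1 ∧
        (P.2 - (1 / 2 : K) • P.1) ^ 2 = μ₂ ^ 2 • 1}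
      {p : K × K × K |
        p.1 ^ 2 - p.2.2 * p.2.1 ^ 2 + p.2.2 / 4 + (μ₁ ^ 2 - μ₂ ^ 2) * p.2.1
          - (μ₁ ^ 2 + μ₂ ^ 2) / 2 = 0} := by
  refine Set.InvOn.bijOn (f' := sliceOfSurfacePoint μ₁ μ₂) ⟨?_, fun p _ => rfl⟩ ?_ ?_
  · rintro ⟨S, Y⟩ ⟨⟨x, a, b, c, rfl, rfl⟩, hS, hY⟩
    obtain ⟨hb, -⟩ := (slice_equations_iff μ₁ μ₂ x a b c).1 ⟨hS, hY⟩
    simp [sliceOfSurfacePoint, hb]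
  · rintro ⟨S, Y⟩ ⟨⟨x, a, b, c, rfl, rfl⟩, hS, hY⟩
    exact ((slice_equations_iff μ₁ μ₂ x a b c).1 ⟨hS, hY⟩).2
  · intro p hp
    exact ⟨⟨_, _, _, _, rfl, rfl⟩, (slice_equations_iff μ₁ μ₂ _ _ _ _).2 ⟨rfl, hp⟩⟩

end Slice

/-- For 2×2 matrices `S = !![0, x; 1, 0]`, `Y = !![a, b; c, -a]`, the equations
`S·Y + Y·S = (μ₁² - μ₂²)·I` and `(Y - S/2)² = μ₂²·I` hold iff `b = τ - c·x` and
`a² - x·c² + x/4 + (μ₁² - μ₂²)·c - (μ₁² + μ₂²)/2 = 0`; moreover `(S,Y) ↦ (a,c,x)` is a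
bijection from the solution set onto the deformed `D₂`-surface. -/
theorem slice_GL2_is_D2_surface (μ₁ μ₂ : ℂ) :
    (∀ x a b c : ℂ,
      ((!![0, x; 1, 0] : Matrix (Fin 2) (Fin 2) ℂ) * !![a, b; c, -a]
          + !![a, b; c, -a] * !![0, x; 1, 0] = (μ₁^2 - μ₂^2) • (1 : Matrix (Fin 2) (Fin 2) ℂ) ∧
        ((!![a, b; c, -a] : Matrix (Fin 2) (Fin 2) ℂ)
            - (1/2 : ℂ) • !![0, x; 1, 0]) ^ 2 = μ₂^2 • (1 : Matrix (Fin 2) (Fin 2) ℂ))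
      ↔ (b = (μ₁^2 - μ₂^2) - c * x ∧
          a^2 - x * c^2 + x/4 + (μ₁^2 - μ₂^2) * c - (μ₁^2 + μ₂^2)/2 = 0)) ∧
    Set.BijOn
      (fun P : Matrix (Fin 2) (Fin 2) ℂ × Matrix (Fin 2) (Fin 2) ℂ =>
        (P.2 0 0, P.2 1 0, P.1 0 1))
      {P : Matrix (Fin 2) (Fin 2) ℂ × Matrix (Fin 2) (Fin 2) ℂ |
        (∃ x a b c : ℂ, P.1 = !![0, x; 1, 0] ∧ P.2 = !![a, b; c, -a]) ∧
        P.1 * P.2 + P.2 * P.1 = (μ₁^2 - μ₂^2) • 1 ∧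
        (P.2 - (1/2 : ℂ) • P.1) ^ 2 = μ₂^2 • 1}
      {p : ℂ × ℂ × ℂ |
        p.1^2 - p.2.2 * p.2.1^2 + p.2.2/4 + (μ₁^2 - μ₂^2) * p.2.1 - (μ₁^2 + μ₂^2)/2 = 0} :=
  ⟨slice_equations_iff μ₁ μ₂, slice_bijOn_surface μ₁ μ₂⟩
end

section
/- Let n ≥ 1, let μ₁, μ₂ ∈ ℂ with μ₁ ≠ 0 and μ₂ ≠ 0, and let d₁, d₂ ∈ ℤ with |d₁| + |d₂| > 2. If A and B are n×n complex matrices with A² = μ₁²·I, B² = μ₂²·I, tr A = d₁·μ₁ and tr B = d₂·μ₂, then A + B is not a matrix in companion form. -/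
/-!
If `A² = μ²` with `μ ≠ 0`, then `(μ - A) / 2μ` is the idempotent projecting onto the
`-μ`-eigenspace, so comparing its trace with its rank gives `2 rank (A - μ) = n - d`. Replacing
`(μ, d)` by `(-μ, -d)` if necessary, `A - ν₁` and `B - ν₂` have ranks `(n - |d₁|)/2` and
`(n - |d₂|)/2` for suitable `ν₁, ν₂`, hence `A + B - (ν₁ + ν₂)` has rank at most
`n - (|d₁| + |d₂|)/2 < n - 1`. A companion matrix minus any scalar has rank at least `n - 1`,
because deleting its first row and last column leaves a unitriangular matrix.
-/

open Matrix

/-- A square matrix is in companion form if its subdiagonal entries are `1`, its last column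
is arbitrary, and all other entries vanish. -/
def IsCompanionForm {n : ℕ} (S : Matrix (Fin n) (Fin n) ℂ) : Prop :=
  ∀ i j : Fin n, (j : ℕ) + 1 < n →
    S i j = if (i : ℕ) = (j : ℕ) + 1 then 1 else 0

namespace Matrix

theorem rank_add_le {K : Type*} [Field K] {l m : Type*} [Fintype m] (A B : Matrix l m K) :
    (A + B).rank ≤ A.rank + B.rank := by
  have hrange : LinearMap.range (A + B).mulVecLin ≤
      LinearMap.range A.mulVecLin ⊔ LinearMap.range B.mulVecLin := by
    rintro _ ⟨v, rfl⟩
    rw [mulVecLin_add, LinearMap.add_apply]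
    exact Submodule.add_mem_sup ⟨v, rfl⟩ ⟨v, rfl⟩
  exact (Submodule.finrank_mono hrange).trans (Submodule.finrank_add_le_finrank_add_finrank _ _)

theorem trace_eq_rank_of_isIdempotentElem {K : Type*} [Field K] {m : Type*} [Fintype m]
    [DecidableEq m] {P : Matrix m m K} (hP : IsIdempotentElem P) : P.trace = P.rank := by
  have hf : IsIdempotentElem (toLin' P) := hP.map toLinAlgEquiv'
  rw [rank, ← toLin'_apply', ← (LinearMap.IsIdempotentElem.isProj_range _ hf).trace,
    trace_toLin'_eq]

theorem sub_smul_one_mul_self_of_sq_eq {R : Type*} [CommRing R] {m : Type*} [Fintype m]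
    [DecidableEq m] {A : Matrix m m R} {μ : R} (hA : A ^ 2 = μ ^ 2 • 1) :
    (A - μ • 1) * (A - μ • 1) = (-(2 * μ)) • (A - μ • 1) := by
  rw [sq] at hA
  simp only [sub_mul, mul_sub, smul_mul_assoc, mul_smul_comm, one_mul, mul_one, hA]
  module

section CharZero

variable {K : Type*} [Field K] [CharZero K] {m : Type*} [Fintype m] [DecidableEq m]
  {A : Matrix m m K} {μ : K} {d : ℤ}

theorem two_mul_rank_sub_smul_one_of_sq_eq (hμ : μ ≠ 0) (hA : A ^ 2 = μ ^ 2 • 1)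
    (htr : A.trace = d * μ) : 2 * ((A - μ • 1).rank : ℤ) = Fintype.card m - d := by
  have h2μ : -(2 * μ) ≠ 0 := by simp [hμ]
  set Q := (-(2 * μ))⁻¹ • (A - μ • 1)
  have hQ : IsIdempotentElem Q := by
    rw [IsIdempotentElem, smul_mul_smul_comm, sub_smul_one_mul_self_of_sq_eq hA, smul_smul,
      mul_assoc, inv_mul_cancel₀ h2μ, mul_one]
  have hrank : Q.rank = (A - μ • 1).rank :=
    rank_smul_of_mem_nonZeroDivisors _ (mem_nonZeroDivisors_of_ne_zero (inv_ne_zero h2μ))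
  have htrace : Q.trace * 2 = Fintype.card m - d := by
    simp only [Q, trace_smul, trace_sub, trace_one, htr, smul_eq_mul]
    field_simp
    ring
  rw [trace_eq_rank_of_isIdempotentElem hQ, hrank] at htrace
  have hcast : ((2 * (A - μ • 1).rank : ℤ) : K) = ((Fintype.card m - d : ℤ) : K) := by
    push_cast
    linear_combination htrace
  exact_mod_cast hcast

theorem exists_two_mul_rank_sub_smul_one_eq_card_sub_abs (hμ : μ ≠ 0) (hA : A ^ 2 = μ ^ 2 • 1)
    (htr : A.trace = d * μ) : ∃ ν : K, 2 * ((A - ν • 1).rank : ℤ) = Fintype.card m - |d| := by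
  rcases le_or_gt 0 d with hd | hd
  · rw [abs_of_nonneg hd]
    exact ⟨μ, two_mul_rank_sub_smul_one_of_sq_eq hμ hA htr⟩
  · rw [abs_of_neg hd]
    refine ⟨-μ, two_mul_rank_sub_smul_one_of_sq_eq (neg_ne_zero.2 hμ) (by rwa [neg_sq]) ?_⟩
    rw [htr]
    push_cast
    ring

end CharZero

end Matrix

theorem IsCompanionForm.sub_one_le_rank_sub_smul_one {n : ℕ} {S : Matrix (Fin n) (Fin n) ℂ}
    (hS : IsCompanionForm S) (c : ℂ) : n - 1 ≤ (S - c • 1).rank := by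
  obtain _ | m := n
  · simp
  set M := (S - c • 1).submatrix Fin.succ Fin.castSucc
  have hentry (i j : Fin m) :
      M i j = (if (i : ℕ) = j then 1 else 0) - if (i : ℕ) + 1 = j then c else 0 := by
    simp [M, hS i.succ j.castSucc (by simp), one_apply, Fin.ext_iff]
  have htri : M.IsUpperTriangular := fun i j (hji : (j : ℕ) < i) => by
    simp [hentry, show (i : ℕ) ≠ j by omega, show (i : ℕ) + 1 ≠ j by omega]
  have hdet : M.det = 1 := by
    simp [det_of_isUpperTriangular htri, hentry]
  calc m + 1 - 1 = M.rank := by rw [rank_of_det_ne_zero (by simp [hdet]), Fintype.card_fin]; rfl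
    _ ≤ (S - c • 1).rank := rank_submatrix_le _ _ _

theorem slice_empty_of_two_lt_abs_add_abs_general (n : ℕ) (μ₁ μ₂ : ℂ)
    (h₁ : μ₁ ≠ 0) (h₂ : μ₂ ≠ 0) (d₁ d₂ : ℤ) (hd : 2 < |d₁| + |d₂|)
    (A B : Matrix (Fin n) (Fin n) ℂ)
    (hA : A ^ 2 = μ₁^2 • 1) (hB : B ^ 2 = μ₂^2 • 1)
    (htrA : A.trace = (d₁ : ℂ) * μ₁) (htrB : B.trace = (d₂ : ℂ) * μ₂) :
    ¬ IsCompanionForm (A + B) := by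
  intro hS
  obtain ⟨ν₁, hrA⟩ := exists_two_mul_rank_sub_smul_one_eq_card_sub_abs h₁ hA htrA
  obtain ⟨ν₂, hrB⟩ := exists_two_mul_rank_sub_smul_one_eq_card_sub_abs h₂ hB htrB
  have hsplit : A + B - (ν₁ + ν₂) • 1 = (A - ν₁ • 1) + (B - ν₂ • 1) := by
    rw [add_smul]
    abel
  have hupper := hsplit ▸ rank_add_le (A - ν₁ • 1) (B - ν₂ • 1)
  have hlower := hS.sub_one_le_rank_sub_smul_one (ν₁ + ν₂)
  rw [Fintype.card_fin] at hrA hrB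
  omega

/-- if `A² = μ₁²·I`, `B² = μ₂²·I`, `tr A = d₁μ₁`, `tr B = d₂μ₂` with
`μ₁, μ₂ ≠ 0` and `|d₁| + |d₂| > 2`, then `A + B` is not in companion form
(the regular Slodowy slice to the sum of the two orbits is empty). -/
theorem slice_empty_of_two_lt_abs_add_abs (n : ℕ) (hn : 1 ≤ n) (μ₁ μ₂ : ℂ)
    (h₁ : μ₁ ≠ 0) (h₂ : μ₂ ≠ 0) (d₁ d₂ : ℤ) (hd : 2 < |d₁| + |d₂|)
    (A B : Matrix (Fin n) (Fin n) ℂ)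
    (hA : A ^ 2 = μ₁^2 • 1) (hB : B ^ 2 = μ₂^2 • 1)
    (htrA : A.trace = (d₁ : ℂ) * μ₁) (htrB : B.trace = (d₂ : ℂ) * μ₂) :
    ¬ IsCompanionForm (A + B) :=
  slice_empty_of_two_lt_abs_add_abs_general n μ₁ μ₂ h₁ h₂ d₁ d₂ hd A B hA hB htrA htrB
end

section
/- Let m ≥ 1, μ₁, μ₂ ∈ ℂ, and set τ = μ₁² − μ₂². Let S₀, Y₀ be 2m×2m complex matrices, let v₁, v₂ be row vectors of length 2m, let e = (0,…,0,1), and form the (2m+2)×(2m+2) block matrices S = [[S₀, 0, 0],[e, μ₁+μ₂, 0],[e, 0, μ₁−μ₂]] and Y = [[Y₀, 0, 0],[v₁, (μ₁−μ₂)/2, 0],[v₂, 0, (μ₁+μ₂)/2]], as well as the (2m+1)×(2m+1) block matrices S₁ = [[S₀, 0],[e, μ₁+μ₂]], Y₁ = [[Y₀, 0],[v₁, (μ₁−μ₂)/2]] and S₂ = [[S₀, 0],[e, μ₁−μ₂]], Y₂ = [[Y₀, 0],[v₂, (μ₁+μ₂)/2]]. Then the pair (S,Y) satisfies S·Y + Y·S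 = τ·I and (Y − S/2)² = μ₂²·I if and only if both pairs (S₁,Y₁) and (S₂,Y₂) satisfy these two equations (with identity matrices of the appropriate sizes). -/
/-!
`S` and `Y` are block lower triangular with a diagonal lower-right block, so both equations split
into the equations for `(S₀, Y₀)`, one scalar equation pair for each diagonal entry, and the
vanishing of the lower-left blocks. Since the lower-right blocks are diagonal, row `i` of those
lower-left blocks only involves `(S₀, Y₀)` and row `i` of `S` and `Y`; hence the conditions for the
two-row extension are exactly those for the two one-row extensions together.
-/

open Matrix

variable {K : Type*} [DivisionRing K] {n ι : Type*}

/-- The paper's `D_{k,m}(μ₁, μ₂)` is `{(S, Y) | IsDPair (μ₁² - μ₂²) μ₂² S Y}`. -/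
def IsDPair {R : Type*} [Ring R] [Module K R] (τ σ : K) (S Y : R) : Prop :=
  S * Y + Y * S = τ • 1 ∧ (Y - (1 / 2 : K) • S) ^ 2 = σ • 1

theorem isDPair_iff {R : Type*} [Ring R] [Module K R] (τ σ : K) (S Y : R) :
    IsDPair τ σ S Y ↔ S * Y + Y * S = τ • 1 ∧ (Y - (1 / 2 : K) • S) ^ 2 = σ • 1 :=
  Iff.rfl

theorem fromBlocks_zero₁₂_sub_smul (A A' : Matrix n n K) (C C' : Matrix ι n K)
    (D D' : Matrix ι ι K) (c : K) :
    fromBlocks A 0 C D - c • fromBlocks A' 0 C' D' =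
      fromBlocks (A - c • A') 0 (C - c • C') (D - c • D') := by
  rw [fromBlocks_smul, sub_eq_add_neg, fromBlocks_neg, fromBlocks_add]
  simp only [smul_zero, neg_zero, add_zero, sub_eq_add_neg]

theorem fromBlocks_smul_one [DecidableEq n] [DecidableEq ι] (c : K) :
    fromBlocks (c • 1) 0 0 (c • 1) = (c • 1 : Matrix (n ⊕ ι) (n ⊕ ι) K) := by
  simp only [← fromBlocks_one, fromBlocks_smul, smul_zero]

theorem of_mul_add_diagonal_mul_of [Fintype n] [Fintype ι] [DecidableEq ι] (A : Matrix n n K)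
    (c w : ι → n → K) (d : ι → K) :
    of c * A + diagonal d * of w = of fun i => c i ᵥ* A + d i • w i := by
  ext i j
  rw [Matrix.add_apply, diagonal_mul, mul_apply_eq_vecMul]
  rfl

variable [Fintype n] [DecidableEq n] [Fintype ι] [DecidableEq ι]

theorem isDPair_fromBlocks_zero₁₂_iff (τ σ : K) (A A' : Matrix n n K) (C C' : Matrix ι n K)
    (D D' : Matrix ι ι K) :
    IsDPair τ σ (fromBlocks A 0 C D) (fromBlocks A' 0 C' D') ↔
      IsDPair τ σ A A' ∧ IsDPair τ σ D D' ∧ C * A' + D * C' + (C' * A + D' * C) = 0 ∧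
        (C' - (1 / 2 : K) • C) * (A' - (1 / 2 : K) • A) +
          (D' - (1 / 2 : K) • D) * (C' - (1 / 2 : K) • C) = 0 := by
  simp only [IsDPair, fromBlocks_zero₁₂_sub_smul, sq, fromBlocks_multiply, fromBlocks_add,
    ← fromBlocks_smul_one, fromBlocks_inj, Matrix.mul_zero, Matrix.zero_mul, add_zero, zero_add,
    true_and]
  tauto

theorem isDPair_diagonal_iff (τ σ : K) (d d' : ι → K) :
    IsDPair τ σ (diagonal d) (diagonal d') ↔ ∀ i, IsDPair τ σ (d i) (d' i) := by
  simp only [IsDPair, diagonal_mul_diagonal, diagonal_add, smul_one_eq_diagonal, ← diagonal_smul,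
    diagonal_sub, diagonal_pow, diagonal_eq_diagonal_iff, forall_and, Pi.pow_apply,
    Pi.smul_apply, smul_eq_mul, mul_one]

/-- The conditions on a row `(c, a)` of `S` and the row `(w, b)` of `Y` below the blocks `A` of `S`
and `A'` of `Y`: the diagonal entries form a pair, and these rows of the lower-left blocks of
`S * Y + Y * S` and `(Y - S / 2) ^ 2` vanish. -/
def IsDRowExtension (τ σ : K) (A A' : Matrix n n K) (c w : n → K) (a b : K) : Prop :=
  IsDPair τ σ a b ∧ c ᵥ* A' + a • w + (w ᵥ* A + b • c) = 0 ∧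
    (w - (1 / 2 : K) • c) ᵥ* (A' - (1 / 2 : K) • A) +
      (b - (1 / 2 : K) • a) • (w - (1 / 2 : K) • c) = 0

theorem isDPair_fromBlocks_diagonal_iff (τ σ : K) (A A' : Matrix n n K) (c w : ι → n → K)
    (d d' : ι → K) :
    IsDPair τ σ (fromBlocks A 0 (of c) (diagonal d)) (fromBlocks A' 0 (of w) (diagonal d')) ↔
      IsDPair τ σ A A' ∧ ∀ i, IsDRowExtension τ σ A A' (c i) (w i) (d i) (d' i) := by
  have hanticomm : of c * A' + diagonal d * of w + (of w * A + diagonal d' * of c) =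
      of fun i => c i ᵥ* A' + d i • w i + (w i ᵥ* A + d' i • c i) := by
    rw [of_mul_add_diagonal_mul_of, of_mul_add_diagonal_mul_of, of_add_of]
    rfl
  have hsq : (of w - (1 / 2 : K) • of c) * (A' - (1 / 2 : K) • A) +
      (diagonal d' - (1 / 2 : K) • diagonal d) * (of w - (1 / 2 : K) • of c) =
      of fun i => (w i - (1 / 2 : K) • c i) ᵥ* (A' - (1 / 2 : K) • A) +
        (d' i - (1 / 2 : K) • d i) • (w i - (1 / 2 : K) • c i) := by
    rw [smul_of, of_sub_of, ← diagonal_smul, diagonal_sub, of_mul_add_diagonal_mul_of]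
    rfl
  rw [isDPair_fromBlocks_zero₁₂_iff, isDPair_diagonal_iff, hanticomm, hsq, ← of_zero,
    of.apply_eq_iff_eq, of.apply_eq_iff_eq]
  simp only [IsDRowExtension, funext_iff, forall_and, Pi.zero_apply]

theorem D0m_is_fibred_product_general (m : ℕ) (μ₁ μ₂ : ℂ)
    (S₀ Y₀ : Matrix (Fin (2 * m)) (Fin (2 * m)) ℂ) (v₁ v₂ : Fin (2 * m) → ℂ) :
    (letI e : Fin (2 * m) → ℂ := fun j => if (j : ℕ) = 2 * m - 1 then 1 else 0
     letI S : Matrix (Fin (2 * m) ⊕ Fin 2) (Fin (2 * m) ⊕ Fin 2) ℂ :=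
       Matrix.fromBlocks S₀ 0 (Matrix.of fun _ j => e j) !![μ₁ + μ₂, 0; 0, μ₁ - μ₂]
     letI Y : Matrix (Fin (2 * m) ⊕ Fin 2) (Fin (2 * m) ⊕ Fin 2) ℂ :=
       Matrix.fromBlocks Y₀ 0 (Matrix.of fun i j => if i = 0 then v₁ j else v₂ j)
         !![(μ₁ - μ₂) / 2, 0; 0, (μ₁ + μ₂) / 2]
     S * Y + Y * S = (μ₁^2 - μ₂^2) • 1 ∧ (Y - (1/2 : ℂ) • S) ^ 2 = μ₂^2 • 1)
    ↔
    ((letI e : Fin (2 * m) → ℂ := fun j => if (j : ℕ) = 2 * m - 1 then 1 else 0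
      letI S₁ : Matrix (Fin (2 * m) ⊕ Fin 1) (Fin (2 * m) ⊕ Fin 1) ℂ :=
        Matrix.fromBlocks S₀ 0 (Matrix.of fun _ j => e j) (Matrix.of fun _ _ => μ₁ + μ₂)
      letI Y₁ : Matrix (Fin (2 * m) ⊕ Fin 1) (Fin (2 * m) ⊕ Fin 1) ℂ :=
        Matrix.fromBlocks Y₀ 0 (Matrix.of fun _ j => v₁ j)
          (Matrix.of fun _ _ => (μ₁ - μ₂) / 2)
      S₁ * Y₁ + Y₁ * S₁ = (μ₁^2 - μ₂^2) • 1 ∧ (Y₁ - (1/2 : ℂ) • S₁) ^ 2 = μ₂^2 • 1)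
     ∧
     (letI e : Fin (2 * m) → ℂ := fun j => if (j : ℕ) = 2 * m - 1 then 1 else 0
      letI S₂ : Matrix (Fin (2 * m) ⊕ Fin 1) (Fin (2 * m) ⊕ Fin 1) ℂ :=
        Matrix.fromBlocks S₀ 0 (Matrix.of fun _ j => e j) (Matrix.of fun _ _ => μ₁ - μ₂)
      letI Y₂ : Matrix (Fin (2 * m) ⊕ Fin 1) (Fin (2 * m) ⊕ Fin 1) ℂ :=
        Matrix.fromBlocks Y₀ 0 (Matrix.of fun _ j => v₂ j)
          (Matrix.of fun _ _ => (μ₁ + μ₂) / 2)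
      S₂ * Y₂ + Y₂ * S₂ = (μ₁^2 - μ₂^2) • 1 ∧ (Y₂ - (1/2 : ℂ) • S₂) ^ 2 = μ₂^2 • 1)) := by
  have hscalar (a : ℂ) : (of fun _ _ => a : Matrix (Fin 1) (Fin 1) ℂ) = diagonal fun _ => a := by
    ext i j
    rw [Subsingleton.elim i j, of_apply, diagonal_apply_eq]
  simp only [← diagonal_vec2, hscalar, ← isDPair_iff, isDPair_fromBlocks_diagonal_iff,
    Fin.forall_fin_two, Fin.forall_fin_one, cons_val_zero, cons_val_one, one_ne_zero, if_true,
    if_false]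
  exact and_and_left

/-- with the block matrices
`S = [[S₀,0,0],[e,μ₁+μ₂,0],[e,0,μ₁-μ₂]]`, `Y = [[Y₀,0,0],[v₁,(μ₁-μ₂)/2,0],[v₂,0,(μ₁+μ₂)/2]]`
of size `2m+2` and the block matrices `S₁ = [[S₀,0],[e,μ₁+μ₂]]`, `Y₁ = [[Y₀,0],[v₁,(μ₁-μ₂)/2]]`,
`S₂ = [[S₀,0],[e,μ₁-μ₂]]`, `Y₂ = [[Y₀,0],[v₂,(μ₁+μ₂)/2]]` of size `2m+1`
(where `e = (0,…,0,1)`), the pair `(S,Y)` satisfies `S·Y + Y·S = τ·I`,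
`(Y - S/2)² = μ₂²·I` iff both `(S₁,Y₁)` and `(S₂,Y₂)` do. -/
theorem D0m_is_fibred_product (m : ℕ) (hm : 1 ≤ m) (μ₁ μ₂ : ℂ)
    (S₀ Y₀ : Matrix (Fin (2 * m)) (Fin (2 * m)) ℂ) (v₁ v₂ : Fin (2 * m) → ℂ) :
    (letI e : Fin (2 * m) → ℂ := fun j => if (j : ℕ) = 2 * m - 1 then 1 else 0
     letI S : Matrix (Fin (2 * m) ⊕ Fin 2) (Fin (2 * m) ⊕ Fin 2) ℂ :=
       Matrix.fromBlocks S₀ 0 (Matrix.of fun _ j => e j) !![μ₁ + μ₂, 0; 0, μ₁ - μ₂]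
     letI Y : Matrix (Fin (2 * m) ⊕ Fin 2) (Fin (2 * m) ⊕ Fin 2) ℂ :=
       Matrix.fromBlocks Y₀ 0 (Matrix.of fun i j => if i = 0 then v₁ j else v₂ j)
         !![(μ₁ - μ₂) / 2, 0; 0, (μ₁ + μ₂) / 2]
     S * Y + Y * S = (μ₁^2 - μ₂^2) • 1 ∧ (Y - (1/2 : ℂ) • S) ^ 2 = μ₂^2 • 1)
    ↔
    ((letI e : Fin (2 * m) → ℂ := fun j => if (j : ℕ) = 2 * m - 1 then 1 else 0
      letI S₁ : Matrix (Fin (2 * m) ⊕ Fin 1) (Fin (2 * m) ⊕ Fin 1) ℂ :=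
        Matrix.fromBlocks S₀ 0 (Matrix.of fun _ j => e j) (Matrix.of fun _ _ => μ₁ + μ₂)
      letI Y₁ : Matrix (Fin (2 * m) ⊕ Fin 1) (Fin (2 * m) ⊕ Fin 1) ℂ :=
        Matrix.fromBlocks Y₀ 0 (Matrix.of fun _ j => v₁ j)
          (Matrix.of fun _ _ => (μ₁ - μ₂) / 2)
      S₁ * Y₁ + Y₁ * S₁ = (μ₁^2 - μ₂^2) • 1 ∧ (Y₁ - (1/2 : ℂ) • S₁) ^ 2 = μ₂^2 • 1)
     ∧
     (letI e : Fin (2 * m) → ℂ := fun j => if (j : ℕ) = 2 * m - 1 then 1 else 0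
      letI S₂ : Matrix (Fin (2 * m) ⊕ Fin 1) (Fin (2 * m) ⊕ Fin 1) ℂ :=
        Matrix.fromBlocks S₀ 0 (Matrix.of fun _ j => e j) (Matrix.of fun _ _ => μ₁ - μ₂)
      letI Y₂ : Matrix (Fin (2 * m) ⊕ Fin 1) (Fin (2 * m) ⊕ Fin 1) ℂ :=
        Matrix.fromBlocks Y₀ 0 (Matrix.of fun _ j => v₂ j)
          (Matrix.of fun _ _ => (μ₁ + μ₂) / 2)
      S₂ * Y₂ + Y₂ * S₂ = (μ₁^2 - μ₂^2) • 1 ∧ (Y₂ - (1/2 : ℂ) • S₂) ^ 2 = μ₂^2 • 1)) :=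
  D0m_is_fibred_product_general m μ₁ μ₂ S₀ Y₀ v₁ v₂
end

section
/- Let n ≥ 1. The map sending a triple of polynomials (x, y, q), where q ∈ ℂ[X] is monic of degree n, x and y have degree at most n−1, and x(X)·y(X) ≡ X (mod q(X)), to the triple of matrices (B₁, B₂, S) with S the companion matrix of q, B₁ = x(S), and B₂ = y(S) (polynomial evaluation at the matrix S), is a bijection onto the set of triples (B₁, B₂, S) of n×n complex matrices such that S is in companion form and B₁·B₂ = S = B₂·B₁. -/
open Matrix Polynomial

/-- The `n × n` companion matrix of a (monic, degree `n`) polynomial `p`: subdiagonal entries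
`1`, last column `-p.coeff i`, all other entries `0`. -/
noncomputable def companionMatrix (n : ℕ) (p : Polynomial ℂ) : Matrix (Fin n) (Fin n) ℂ :=
  Matrix.of fun i j =>
    if (j : ℕ) + 1 < n then (if (i : ℕ) = (j : ℕ) + 1 then 1 else 0)
    else -p.coeff (i : ℕ)

/-! A matrix `S` in companion form has `e₀` as cyclic vector: `S ^ k e₀ = e_k` for `k < n`.
Hence `p ↦ p(S) e₀` sends a polynomial of degree `< n` to its coefficient vector, so `aeval S` is
injective on such polynomials, and a matrix commuting with `S` is determined by its first column,
hence is the polynomial in `S` with that column as coefficients. The last column of `S` yields the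
monic `q` with companion matrix `S`; `q(S)` kills `e₀`, hence vanishes, and division with
remainder gives `q ∣ f ↔ f(S) = 0`. So `x y ≡ X (mod q)` says exactly `x(S) y(S) = S`. -/

theorem commute_of_mul_eq_of_mul_eq {M : Type*} [Semigroup M] {a b c : M}
    (hab : a * b = c) (hba : b * a = c) : Commute a c :=
  calc a * c = a * b * a := by rw [← hba, mul_assoc]
    _ = c * a := by rw [hab]

theorem commute_aeval_self {R A : Type*} [CommSemiring R] [Semiring A] [Algebra R A]
    (a : A) (p : R[X]) : Commute (aeval a p) a := by
  simpa using (Commute.all p X).map (aeval a)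

theorem natDegree_lt_of_degree_lt {R : Type*} [Semiring R] {p : R[X]} {n : ℕ} [NeZero n]
    (h : p.degree < n) : p.natDegree < n := by
  rcases eq_or_ne p 0 with rfl | hp
  · exact Nat.pos_of_neZero n
  · exact (natDegree_lt_iff_degree_lt hp).2 h

section companionPolynomial

variable {R : Type*} [Ring R] [DecidableEq R] {n : ℕ} [NeZero n]

noncomputable def companionPolynomial (S : Matrix (Fin n) (Fin n) R) : R[X] :=
  X ^ n - ofFn n (S.col ⊤)

theorem companionPolynomial_monic (S : Matrix (Fin n) (Fin n) R) :
    (companionPolynomial S).Monic :=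
  monic_X_pow_sub (ofFn_degree_lt _)

theorem natDegree_companionPolynomial [Nontrivial R] (S : Matrix (Fin n) (Fin n) R) :
    (companionPolynomial S).natDegree = n := by
  have hlt : (ofFn n (S.col ⊤)).natDegree < (X ^ n : R[X]).natDegree := by
    rw [natDegree_X_pow]
    exact ofFn_natDegree_lt NeZero.one_le _
  rw [companionPolynomial, natDegree_sub_eq_left_of_natDegree_lt hlt, natDegree_X_pow]

theorem coeff_companionPolynomial_of_lt (S : Matrix (Fin n) (Fin n) R) {m : ℕ} (hm : m < n) :
    (companionPolynomial S).coeff m = -S ⟨m, hm⟩ ⊤ := by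
  simp [companionPolynomial, coeff_X_pow, hm.ne, hm]

end companionPolynomial

theorem isCompanionForm_companionMatrix {n : ℕ} (p : ℂ[X]) :
    IsCompanionForm (companionMatrix n p) := fun i j hj => by
  rw [companionMatrix, of_apply, if_pos hj]

theorem companionPolynomial_companionMatrix {n : ℕ} [NeZero n] {q : ℂ[X]} (hq : q.Monic)
    (hqn : q.natDegree = n) : companionPolynomial (companionMatrix n q) = q := by
  ext m
  rcases lt_trichotomy m n with hm | hm | hm
  · rw [coeff_companionPolynomial_of_lt _ hm, companionMatrix, of_apply, Fin.val_top,
      if_neg (by omega), neg_neg]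
  · have hlead := (companionPolynomial_monic (companionMatrix n q)).coeff_natDegree
    rw [natDegree_companionPolynomial] at hlead
    rw [hm, hlead, ← hqn, hq.coeff_natDegree]
  · rw [coeff_eq_zero_of_natDegree_lt (by rwa [natDegree_companionPolynomial]),
      coeff_eq_zero_of_natDegree_lt (by rwa [hqn])]

namespace IsCompanionForm

variable {n : ℕ} {S : Matrix (Fin n) (Fin n) ℂ}

theorem mulVec_single (hS : IsCompanionForm S) {j : Fin n} (hj : (j : ℕ) + 1 < n) :
    S *ᵥ Pi.single j 1 = Pi.single ⟨j + 1, hj⟩ 1 := by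
  ext i
  rw [mulVec_single_one, col_apply, hS i j hj]
  simp [Pi.single_apply, Fin.ext_iff]

variable [NeZero n]

theorem pow_mulVec_single_zero (hS : IsCompanionForm S) (k : Fin n) :
    S ^ (k : ℕ) *ᵥ Pi.single 0 1 = Pi.single k 1 := by
  obtain ⟨k, hk⟩ := k
  induction k with
  | zero => exact one_mulVec _
  | succ k ih => rw [pow_succ', ← mulVec_mulVec, ih (by omega), hS.mulVec_single]

theorem aeval_ofFn_mulVec_single_zero (hS : IsCompanionForm S) (v : Fin n → ℂ) :
    aeval S (ofFn n v) *ᵥ Pi.single 0 1 = v := by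
  simp only [ofFn_eq_sum_monomial, map_sum, aeval_monomial, ← Algebra.smul_def, sum_mulVec,
    smul_mulVec, hS.pow_mulVec_single_zero]
  exact (pi_eq_sum_univ' v).symm

theorem eq_of_commute_of_mulVec_single_zero_eq (hS : IsCompanionForm S)
    {M N : Matrix (Fin n) (Fin n) ℂ} (hM : Commute M S) (hN : Commute N S)
    (h : M *ᵥ Pi.single 0 1 = N *ᵥ Pi.single 0 1) : M = N := by
  refine ext_of_mulVec_single fun k => ?_
  rw [← hS.pow_mulVec_single_zero k, mulVec_mulVec, mulVec_mulVec, (hM.pow_right k).eq,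
    (hN.pow_right k).eq, ← mulVec_mulVec, ← mulVec_mulVec, h]

theorem aeval_ofFn_col_zero (hS : IsCompanionForm S) {B : Matrix (Fin n) (Fin n) ℂ}
    (hB : Commute B S) : aeval S (ofFn n (B.col 0)) = B :=
  hS.eq_of_commute_of_mulVec_single_zero_eq (commute_aeval_self S _) hB
    (by rw [hS.aeval_ofFn_mulVec_single_zero, mulVec_single_one])

theorem injOn_aeval (hS : IsCompanionForm S) :
    Set.InjOn (aeval S) {p : ℂ[X] | p.degree < n} := by
  intro p hp p' hp' h
  rw [← ofFn_comp_toFn_eq_id_of_natDegree_lt (natDegree_lt_of_degree_lt hp),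
    ← ofFn_comp_toFn_eq_id_of_natDegree_lt (natDegree_lt_of_degree_lt hp')] at h ⊢
  have hcoeff := congrArg (· *ᵥ Pi.single 0 1) h
  simp only [hS.aeval_ofFn_mulVec_single_zero] at hcoeff
  rw [hcoeff]

theorem companionMatrix_companionPolynomial (hS : IsCompanionForm S) :
    companionMatrix n (companionPolynomial S) = S := by
  ext i j
  by_cases hj : (j : ℕ) + 1 < n
  · rw [companionMatrix, of_apply, if_pos hj, hS i j hj]
  · obtain rfl : j = ⊤ := Fin.ext (by rw [Fin.val_top]; omega)
    rw [companionMatrix, of_apply, if_neg hj, coeff_companionPolynomial_of_lt _ i.2, neg_neg]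

theorem aeval_companionPolynomial (hS : IsCompanionForm S) :
    aeval S (companionPolynomial S) = 0 := by
  refine hS.eq_of_commute_of_mulVec_single_zero_eq (commute_aeval_self S _)
    (Commute.zero_left S) ?_
  have hpow : S ^ n *ᵥ Pi.single 0 1 = S.col ⊤ := by
    have hlast := hS.pow_mulVec_single_zero ⊤
    rw [Fin.val_top] at hlast
    rw [← mul_pow_sub_one (NeZero.ne n), ← mulVec_mulVec, hlast, mulVec_single_one]
  rw [companionPolynomial, map_sub, sub_mulVec, map_pow, aeval_X, hpow,
    hS.aeval_ofFn_mulVec_single_zero, sub_self, zero_mulVec]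

theorem companionPolynomial_dvd_iff (hS : IsCompanionForm S) {f : ℂ[X]} :
    companionPolynomial S ∣ f ↔ aeval S f = 0 := by
  refine ⟨fun ⟨g, hg⟩ => by rw [hg, map_mul, hS.aeval_companionPolynomial, zero_mul],
    fun hf => ?_⟩
  have hmonic := companionPolynomial_monic S
  rw [← modByMonic_eq_zero_iff_dvd hmonic]
  refine hS.injOn_aeval ?_ (by simp) ?_
  · have := degree_modByMonic_lt f hmonic
    rwa [degree_eq_natDegree hmonic.ne_zero, natDegree_companionPolynomial] at this
  · rw [aeval_modByMonic_eq_self_of_root hS.aeval_companionPolynomial, hf, map_zero]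

end IsCompanionForm

/-- `(x, y, q) ↦ (x(S), y(S), S)` with `S` the companion matrix of `q` is a
bijection from triples with `q` monic of degree `n`, `deg x, deg y ≤ n-1` and
`x·y ≡ X (mod q)`, onto triples `(B₁, B₂, S)` of `n×n` matrices with `S` in companion form
and `B₁·B₂ = S = B₂·B₁`.  This is the coordinate description of the Hilbert scheme of `n`
points of `ℂ²` transverse to `π(x,y) = xy`. -/
theorem transverse_hilbert_C2 (n : ℕ) (hn : 1 ≤ n) :
    Set.BijOn
      (fun t : Polynomial ℂ × Polynomial ℂ × Polynomial ℂ =>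
        ((Polynomial.aeval (companionMatrix n t.2.2)) t.1,
         (Polynomial.aeval (companionMatrix n t.2.2)) t.2.1,
         companionMatrix n t.2.2))
      {t : Polynomial ℂ × Polynomial ℂ × Polynomial ℂ |
        t.2.2.Monic ∧ t.2.2.natDegree = n ∧
        t.1.degree < (n : ℕ) ∧ t.2.1.degree < (n : ℕ) ∧
        t.2.2 ∣ (t.1 * t.2.1 - X)}
      {P : Matrix (Fin n) (Fin n) ℂ × Matrix (Fin n) (Fin n) ℂ × Matrix (Fin n) (Fin n) ℂ |
        IsCompanionForm P.2.2 ∧ P.1 * P.2.1 = P.2.2 ∧ P.2.1 * P.1 = P.2.2} := by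
  have : NeZero n := ⟨by omega⟩
  refine ⟨?_, ?_, ?_⟩
  · rintro ⟨x, y, q⟩ ⟨hq, hqn, -, -, hdvd⟩
    have hS := isCompanionForm_companionMatrix (n := n) q
    rw [← companionPolynomial_companionMatrix hq hqn, hS.companionPolynomial_dvd_iff, map_sub,
      map_mul, aeval_X, sub_eq_zero] at hdvd
    exact ⟨hS, hdvd, by rw [← map_mul, mul_comm, map_mul, hdvd]⟩
  · rintro ⟨x, y, q⟩ ⟨hq, hqn, hx, hy, -⟩ ⟨x', y', q'⟩ ⟨hq', hqn', hx', hy', -⟩ h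
    dsimp only at hq hqn hx hy hq' hqn' hx' hy'
    simp only [Prod.mk.injEq] at h
    obtain ⟨hxx', hyy', hqq'⟩ := h
    obtain rfl : q = q' := by
      rw [← companionPolynomial_companionMatrix hq hqn, hqq',
        companionPolynomial_companionMatrix hq' hqn']
    have hS := isCompanionForm_companionMatrix (n := n) q
    rw [hS.injOn_aeval hx hx' hxx', hS.injOn_aeval hy hy' hyy']
  · rintro ⟨B₁, B₂, S⟩ ⟨hS, h₁₂, h₂₁⟩
    have hB₁ := hS.aeval_ofFn_col_zero (commute_of_mul_eq_of_mul_eq h₁₂ h₂₁)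
    have hB₂ := hS.aeval_ofFn_col_zero (commute_of_mul_eq_of_mul_eq h₂₁ h₁₂)
    refine ⟨(ofFn n (B₁.col 0), ofFn n (B₂.col 0), companionPolynomial S),
      ⟨companionPolynomial_monic S, natDegree_companionPolynomial S, ofFn_degree_lt _,
        ofFn_degree_lt _, ?_⟩, ?_⟩
    · rw [hS.companionPolynomial_dvd_iff, map_sub, map_mul, hB₁, hB₂, aeval_X, h₁₂, sub_self]
    · simp only [hS.companionMatrix_companionPolynomial, hB₁, hB₂]
end

section
/- Let n ≥ 1 and let q ∈ ℂ[X] be monic of degree n. The map sending a pair of polynomials (x, y), each of degree at most n−1 in the variable X, to the polynomial p(u) = x(u²) + u·y(u²) of degree at most 2n−1, is a bijection from the set of pairs (x, y) with x(X)² − X·y(X)² ≡ 1 (mod q(X)) onto the set of polynomials p of degree at most 2n−1 with p(u)·p(−u) ≡ 1 (mod q(u²)). -/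
/-!
Writing `p(u) = x(u²) + u·y(u²)` splits a polynomial uniquely into its even and odd parts, and
`p` has degree `< 2n` exactly when both parts have degree `< n`. Since `p(-u) = x(u²) - u·y(u²)`,
the product `p(u)·p(-u) - 1` is `x² - X·y² - 1` with `X` replaced by `u²`, and divisibility is
unchanged by this substitution: `contract` undoes `expand` and is linear over expanded polynomials.
-/

open Polynomial

namespace Polynomial

variable {R : Type*}

section CommSemiring

variable [CommSemiring R]

theorem expand_dvd_expand_iff {p : ℕ} (hp : p ≠ 0) {f g : R[X]} :
    expand R p f ∣ expand R p g ↔ f ∣ g := by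
  refine ⟨fun ⟨h, hg⟩ => ⟨contract p h, ?_⟩, _root_.map_dvd _⟩
  rw [← contract_expand p hp (f := g), hg, mul_comm, contract_mul_expand hp, mul_comm]

theorem coeff_expand_two_add_X_mul_expand_two_two_mul (x y : R[X]) (k : ℕ) :
    (expand R 2 x + X * expand R 2 y).coeff (2 * k) = x.coeff k := by
  rw [coeff_add, coeff_expand_mul' two_pos]
  rcases k with _ | k
  · simp
  · rw [show 2 * (k + 1) = 2 * k + 1 + 1 by ring, coeff_X_mul, coeff_expand two_pos,
      if_neg (by omega), add_zero]

theorem coeff_expand_two_add_X_mul_expand_two_two_mul_add_one (x y : R[X]) (k : ℕ) :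
    (expand R 2 x + X * expand R 2 y).coeff (2 * k + 1) = y.coeff k := by
  rw [coeff_add, coeff_X_mul, coeff_expand_mul' two_pos, coeff_expand two_pos, if_neg (by omega),
    zero_add]

noncomputable def evenOddEquiv : R[X] × R[X] ≃ R[X] where
  toFun xy := expand R 2 xy.1 + X * expand R 2 xy.2
  invFun p := (contract 2 p, contract 2 p.divX)
  left_inv := fun ⟨x, y⟩ => by
    ext k
    · rw [coeff_contract two_ne_zero, mul_comm, coeff_expand_two_add_X_mul_expand_two_two_mul]
    · rw [coeff_contract two_ne_zero, coeff_divX, mul_comm,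
        coeff_expand_two_add_X_mul_expand_two_two_mul_add_one]
  right_inv p := by
    ext m
    obtain ⟨k, rfl | rfl⟩ := Nat.even_or_odd' m
    · rw [coeff_expand_two_add_X_mul_expand_two_two_mul, coeff_contract two_ne_zero, mul_comm]
    · rw [coeff_expand_two_add_X_mul_expand_two_two_mul_add_one, coeff_contract two_ne_zero,
        coeff_divX, mul_comm]

theorem evenOddEquiv_apply (xy : R[X] × R[X]) :
    evenOddEquiv xy = expand R 2 xy.1 + X * expand R 2 xy.2 :=
  rfl

theorem degree_evenOddEquiv_lt_iff {n : ℕ} {xy : R[X] × R[X]} :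
    (evenOddEquiv xy).degree < ↑(2 * n) ↔ xy.1.degree < n ∧ xy.2.degree < n := by
  simp only [degree_lt_iff_coeff_zero, evenOddEquiv_apply]
  refine ⟨fun h => ⟨fun k hk => ?_, fun k hk => ?_⟩, fun ⟨hx, hy⟩ m hm => ?_⟩
  · rw [← coeff_expand_two_add_X_mul_expand_two_two_mul xy.1 xy.2]
    exact h _ (by omega)
  · rw [← coeff_expand_two_add_X_mul_expand_two_two_mul_add_one xy.1 xy.2]
    exact h _ (by omega)
  · obtain ⟨k, rfl | rfl⟩ := Nat.even_or_odd' m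
    · rw [coeff_expand_two_add_X_mul_expand_two_two_mul]
      exact hx k (by omega)
    · rw [coeff_expand_two_add_X_mul_expand_two_two_mul_add_one]
      exact hy k (by omega)

end CommSemiring

section CommRing

variable [CommRing R]

theorem expand_two_comp_neg_X (f : R[X]) : (expand R 2 f).comp (-X) = expand R 2 f := by
  rw [expand_eq_comp_X_pow, comp_assoc, pow_comp, X_comp, neg_sq]

theorem evenOddEquiv_mul_comp_neg_X (xy : R[X] × R[X]) :
    evenOddEquiv xy * (evenOddEquiv xy).comp (-X) = expand R 2 (xy.1 ^ 2 - X * xy.2 ^ 2) := by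
  rw [evenOddEquiv_apply, add_comp, mul_comp, X_comp, expand_two_comp_neg_X,
    expand_two_comp_neg_X]
  simp only [map_sub, map_mul, map_pow, expand_X]
  ring

end CommRing

end Polynomial

theorem transverse_hilbert_double_cover_rational_maps_general (n : ℕ)
    (q : Polynomial ℂ) :
    Set.BijOn
      (fun xy : Polynomial ℂ × Polynomial ℂ =>
        xy.1.comp (X ^ 2) + X * xy.2.comp (X ^ 2))
      {xy : Polynomial ℂ × Polynomial ℂ |
        xy.1.degree < (n : ℕ) ∧ xy.2.degree < (n : ℕ) ∧
        q ∣ (xy.1 ^ 2 - X * xy.2 ^ 2 - 1)}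
      {p : Polynomial ℂ |
        p.degree < (2 * n : ℕ) ∧ q.comp (X ^ 2) ∣ (p * p.comp (-X) - 1)} :=
  evenOddEquiv.bijOn fun xy => by
    rw [Set.mem_ofPred, Set.mem_ofPred, degree_evenOddEquiv_lt_iff, ← expand_eq_comp_X_pow,
      evenOddEquiv_mul_comp_neg_X, ← map_one (expand ℂ 2), ← map_sub,
      expand_dvd_expand_iff two_ne_zero, map_one, and_assoc]

/-- for a monic `q` of degree `n`, the map `(x, y) ↦ p(u) = x(u²) + u·y(u²)` is a
bijection from pairs of polynomials of degree `≤ n-1` with `x² - X·y² ≡ 1 (mod q)` onto the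
polynomials `p` of degree `≤ 2n-1` with `p(u)·p(-u) ≡ 1 (mod q(u²))`. -/
theorem transverse_hilbert_double_cover_rational_maps (n : ℕ) (hn : 1 ≤ n)
    (q : Polynomial ℂ) (hq : q.Monic) (hdeg : q.natDegree = n) :
    Set.BijOn
      (fun xy : Polynomial ℂ × Polynomial ℂ =>
        xy.1.comp (X ^ 2) + X * xy.2.comp (X ^ 2))
      {xy : Polynomial ℂ × Polynomial ℂ |
        xy.1.degree < (n : ℕ) ∧ xy.2.degree < (n : ℕ) ∧
        q ∣ (xy.1 ^ 2 - X * xy.2 ^ 2 - 1)}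
      {p : Polynomial ℂ |
        p.degree < (2 * n : ℕ) ∧ q.comp (X ^ 2) ∣ (p * p.comp (-X) - 1)} :=
  transverse_hilbert_double_cover_rational_maps_general n q
end

section
/- Let S and Y be n×n complex matrices with S·Y + Y·S = τ·I for some τ ∈ ℂ, and suppose S is regular (its minimal polynomial equals its characteristic polynomial). (a) If τ ≠ 0 and 0 is an eigenvalue of S, then the algebraic multiplicity of 0 as a root of the characteristic polynomial of S is even. (b) If τ = 0 and u ≠ 0 satisfies S·u = 0, then u is an eigenvector of Y, i.e. Y·u = ρ·u for some ρ ∈ ℂ. -/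
/-!
(a) From `S Y + Y S = τ` one gets that `Y` commutes with `S²`. Write the minimal polynomial as
`X ^ m * q` with `q(0) ≠ 0`; if `m = 2k + 1` were odd, put `B = q(S)`. Expanding
`τ • B S^(2k) B = B S^(2k) (S Y + Y S) B` and moving `Y` past `S^(2k)`, both terms contain
`S^(2k+1) B = 0`, so `X^(2k) q²` annihilates `S` although `X^(2k+1) q` does not divide it.

(b) If `minpoly S = charpoly S`, then `dim ker S ≤ 1`: with `p` the minimal polynomial of `S`
on its range, `X p` annihilates `S`, so `n ≤ deg p + 1 ≤ rank S + 1`. When `S Y = - Y S`, `Y`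
preserves `ker S`, a line, so any nonzero vector in it is an eigenvector of `Y`.
-/

open Matrix Polynomial Module

theorem Commute.mul_self_of_commute_add_mul {R : Type*} [Ring R] {a b : R}
    (h : Commute a (a * b + b * a)) : Commute (a * a) b := by
  show a * a * b = b * (a * a)
  refine add_right_cancel (b := a * b * a) ?_
  calc a * a * b + a * b * a = a * (a * b + b * a) := by noncomm_ring
    _ = (a * b + b * a) * a := h.eq
    _ = b * (a * a) + a * b * a := by noncomm_ring

theorem dvd_of_pow_succ_mul_dvd_pow_mul_sq {M : Type*} [CommMonoidWithZero M] [IsCancelMulZero M]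
    {a q : M} {m : ℕ} (ha : a ≠ 0) (h : a ^ (m + 1) * q ∣ a ^ m * q ^ 2) : a ∣ q := by
  rcases eq_or_ne q 0 with rfl | hq
  · exact dvd_zero a
  rw [pow_succ, sq, mul_right_comm, ← mul_assoc] at h
  exact (mul_dvd_mul_iff_left (mul_ne_zero (pow_ne_zero m ha) hq)).mp h

section Anticommutator

variable {K A : Type*} [Field K] [Ring A] [Algebra K A] {S Y : A} {τ : K}

theorem aeval_X_pow_mul_sq_eq_zero_of_add_mul_eq_algebraMap (hτ : τ ≠ 0)
    (hSY : S * Y + Y * S = algebraMap K A τ) {q : K[X]} {k : ℕ}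
    (h : aeval S (X ^ (2 * k + 1) * q) = 0) : aeval S (X ^ (2 * k) * q ^ 2) = 0 := by
  set B := aeval S q
  have hSB (m : ℕ) : Commute (S ^ m) B := by
    simpa using ((commute_X q).map (aeval S)).pow_left m
  have hYS : Commute Y (S ^ (2 * k)) := by
    rw [pow_mul, sq]
    refine (Commute.mul_self_of_commute_add_mul ?_).symm.pow_right k
    rw [hSY]
    exact (Algebra.commutes τ S).symm
  have hSkB : S ^ (2 * k + 1) * B = 0 := by simpa using h
  have hBSk : B * S ^ (2 * k + 1) = 0 := (hSB _).eq ▸ hSkB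
  have hτB : τ • (B * S ^ (2 * k) * B) = 0 := by
    calc τ • (B * S ^ (2 * k) * B) = B * S ^ (2 * k) * (S * Y + Y * S) * B := by
          rw [hSY, Algebra.smul_def, ← mul_assoc, Algebra.commutes]
      _ = B * S ^ (2 * k + 1) * Y * B + B * (S ^ (2 * k) * Y) * S * B := by
          rw [pow_succ]; noncomm_ring
      _ = B * S ^ (2 * k + 1) * Y * B + B * Y * (S ^ (2 * k + 1) * B) := by
          rw [← hYS.eq, pow_succ]; noncomm_ring
      _ = 0 := by rw [hBSk, hSkB]; simp
  have hB : B * S ^ (2 * k) * B = 0 := (smul_eq_zero.mp hτB).resolve_left hτ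
  rwa [map_mul, map_pow, map_pow, aeval_X, sq, ← mul_assoc, (hSB (2 * k)).eq]

theorem even_rootMultiplicity_zero_minpoly_of_add_mul_eq_algebraMap (hτ : τ ≠ 0)
    (hSY : S * Y + Y * S = algebraMap K A τ) : Even ((minpoly K S).rootMultiplicity 0) := by
  rcases eq_or_ne (minpoly K S) 0 with h0 | h0
  · simp [h0]
  obtain ⟨q, hq, hXq⟩ := (minpoly K S).exists_eq_pow_rootMultiplicity_mul_and_not_dvd h0 0
  rw [map_zero, sub_zero] at hq hXq
  by_contra hodd
  obtain ⟨k, hk⟩ := Nat.not_even_iff_odd.mp hodd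
  rw [hk] at hq
  have hdvd : minpoly K S ∣ X ^ (2 * k) * q ^ 2 :=
    minpoly.dvd K S <| aeval_X_pow_mul_sq_eq_zero_of_add_mul_eq_algebraMap hτ hSY <|
      hq ▸ minpoly.aeval K S
  exact hXq <| dvd_of_pow_succ_mul_dvd_pow_mul_sq X_ne_zero (hq ▸ hdvd)

end Anticommutator

theorem LinearMap.coe_aeval_restrict_apply {R M : Type*} [CommRing R] [AddCommGroup M] [Module R M]
    {p : Submodule R M} (f : Module.End R M) (h : ∀ x ∈ p, f x ∈ p) (q : R[X]) (x : p) :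
    (aeval (f.restrict h) q x : M) = aeval f q x := by
  induction q using Polynomial.induction_on' with
  | add q r hq hr => simp [hq, hr]
  | monomial k a => simp [aeval_monomial, Module.End.pow_restrict k h]

theorem LinearMap.finrank_ker_le_one_of_finrank_le_natDegree_minpoly {K V : Type*} [Field K]
    [AddCommGroup V] [Module K V] [FiniteDimensional K V] (f : Module.End K V)
    (hf : finrank K V ≤ (minpoly K f).natDegree) : finrank K (LinearMap.ker f) ≤ 1 := by
  have hrange : ∀ x ∈ LinearMap.range f, f x ∈ LinearMap.range f := fun x _ ↦ mem_range_self f x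
  set p := minpoly K (f.restrict hrange)
  have hpX : aeval f (p * X) = 0 := by
    ext x
    have := f.coe_aeval_restrict_apply hrange p ⟨f x, mem_range_self f x⟩
    rw [minpoly.aeval] at this
    simp [← this]
  have hp0 : p ≠ 0 := minpoly.ne_zero_of_finite K _
  have hdeg : (minpoly K f).natDegree ≤ p.natDegree + 1 := by
    simpa [natDegree_mul hp0 X_ne_zero] using
      natDegree_le_of_dvd (minpoly.dvd K f hpX) (mul_ne_zero hp0 X_ne_zero)
  have hp_deg : p.natDegree ≤ finrank K (LinearMap.range f) := by
    simpa [LinearMap.charpoly_natDegree] using natDegree_le_of_dvd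
      (LinearMap.minpoly_dvd_charpoly (f.restrict hrange)) (LinearMap.charpoly_monic _).ne_zero
  have := LinearMap.finrank_range_add_finrank_ker f
  omega

theorem Submodule.exists_smul_eq_of_finrank_le_one {K V : Type*} [Field K] [AddCommGroup V]
    [Module K V] [FiniteDimensional K V] {W : Submodule K V} (hW : finrank K W ≤ 1) {u v : V}
    (hu : u ∈ W) (hu0 : u ≠ 0) (hv : v ∈ W) : ∃ ρ : K, v = ρ • u := by
  have hu0' : (⟨u, hu⟩ : W) ≠ 0 := by simpa using hu0
  have hW1 : finrank K W = 1 := le_antisymm hW (finrank_pos_iff_exists_ne_zero.mpr ⟨_, hu0'⟩)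
  obtain ⟨ρ, hρ⟩ := exists_smul_eq_of_finrank_eq_one hW1 hu0' ⟨v, hv⟩
  exact ⟨ρ, (congr_arg Subtype.val hρ).symm⟩

/-- let `S·Y + Y·S = τ·I` with `S` regular. (a) If `τ ≠ 0` and `0` is an
eigenvalue of `S`, then its algebraic multiplicity is even. (b) If `τ = 0` and `S·u = 0` with
`u ≠ 0`, then `u` is an eigenvector of `Y`. -/
theorem zero_eigenvalue_multiplicity (n : ℕ) (S Y : Matrix (Fin n) (Fin n) ℂ) (τ : ℂ)
    (hSY : S * Y + Y * S = τ • 1)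
    (hreg : minpoly ℂ S = S.charpoly) :
    (τ ≠ 0 → S.charpoly.IsRoot 0 → Even (S.charpoly.rootMultiplicity 0)) ∧
    (τ = 0 → ∀ u : Fin n → ℂ, u ≠ 0 → S.mulVec u = 0 → ∃ ρ : ℂ, Y.mulVec u = ρ • u) := by
  refine ⟨fun hτ _ ↦ ?_, fun hτ u hu hSu ↦ ?_⟩
  · rw [← hreg]
    exact even_rootMultiplicity_zero_minpoly_of_add_mul_eq_algebraMap hτ
      (hSY.trans (Algebra.algebraMap_eq_smul_one τ).symm)
  · have hker : finrank ℂ (LinearMap.ker (toLin' S)) ≤ 1 :=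
      LinearMap.finrank_ker_le_one_of_finrank_le_natDegree_minpoly _ <| by
        rw [minpoly_toLin', hreg, charpoly_natDegree_eq_dim, finrank_fin_fun, Fintype.card_fin]
    have hSY_anti : S * Y = -(Y * S) := eq_neg_of_add_eq_zero_left (by rw [hSY, hτ, zero_smul])
    have hSYu : S *ᵥ (Y *ᵥ u) = 0 := by
      rw [mulVec_mulVec, hSY_anti, neg_mulVec, ← mulVec_mulVec, hSu, mulVec_zero, neg_zero]
    exact Submodule.exists_smul_eq_of_finrank_le_one hker (by simpa using hSu) hu
      (by simpa using hSYu)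
end

section
/- For every integer m ≥ 1 and all μ₁, μ₂ ∈ ℂ with μ₁ ≠ 0 and μ₂ ≠ 0, the set D_{2,m}(μ₁,μ₂) is nonempty: there exist 2m×2m complex matrices S and Y with S in companion form, tr S = 0, tr Y = 0, S·Y + Y·S = (μ₁²−μ₂²)·I and (Y − S/2)² = μ₂²·I. -/
/-!
Let `ℓ = μ₁² - μ₂²`, `p(X) = P(X²)` with `P = (X - a)ᵐ` for some `a ≠ 0`, and `V = ℂ[X]/(p)`
with `x` the class of `X`. In the basis `1, x, …, x²ᵐ⁻¹` multiplication by `x` is the companion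
matrix `S` of `p`. As `p` is even, `τ : x ↦ -x` is an involutive automorphism of `V`, and `x` is
a unit. Operators `v ↦ a v + b τ(v)` multiply like elements of the skew group ring of `⟨τ⟩`.
For `Y v = q v + r τ(v)` with `q = ℓ/(2x)` and `r = ρ(x²)` fixed by `τ`, this gives
`SY + YS = 2xq = ℓ` and `(Y - S/2)² = w² + r²` with `w = q - x/2`, which equals `μ₂²` once
`x² r² = μ₂² x² - (x w)²`: a congruence for `ρ` modulo `(X - a)ᵐ` that Newton's iteration
solves as soon as `μ₂² a - ((ℓ - a)/2)² ≠ 0`. The traces vanish because `S` and `q`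
anticommute with `τ` and `rτ` anticommutes with `S`.
-/

open Matrix

open Polynomial

theorem Polynomial.exists_X_sub_C_pow_dvd_mul_sq_sub {K : Type*} [Field K] [NeZero (2 : K)]
    {F G : K[X]} {a c : K} (hG : G.eval a ≠ 0) (hc : c ≠ 0) (hFG : G.eval a * c ^ 2 = F.eval a)
    (k : ℕ) :
    ∃ ρ : K[X], ρ.eval a = c ∧ (X - C a) ^ (k + 1) ∣ G * ρ ^ 2 - F := by
  induction k with
  | zero =>
    refine ⟨C c, eval_C, ?_⟩
    rw [zero_add, pow_one, dvd_iff_isRoot]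
    simp [hFG]
  | succ k ih =>
    obtain ⟨ρ, hρa, H, hH⟩ := ih
    -- Newton step: the correction `δ (X - a) ^ (k + 1)` kills the next Taylor coefficient.
    set δ := -H.eval a / (2 * G.eval a * c)
    refine ⟨ρ + C δ * (X - C a) ^ (k + 1), by simp [hρa], ?_⟩
    have hsplit : G * (ρ + C δ * (X - C a) ^ (k + 1)) ^ 2 - F =
        (X - C a) ^ (k + 1) * (H + 2 * G * ρ * C δ + G * C δ ^ 2 * (X - C a) ^ (k + 1)) := by
      linear_combination hH
    rw [hsplit, pow_succ]
    refine mul_dvd_mul_left _ (dvd_iff_isRoot.mpr ?_)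
    simp only [IsRoot, eval_add, eval_mul, eval_pow, eval_C, eval_sub, eval_X, sub_self,
      eval_ofNat, hρa, δ]
    field_simp
    ring

/-- For `w = (ℓ - x²)/(2x)`, the equation `x² r² = radicand ℓ ν (x²)` says `w² + r² = ν`. -/
noncomputable def radicand {K : Type*} [Field K] (ℓ ν : K) : K[X] :=
  C ν * X - (C (ℓ / 2) - C (1 / 2) * X) ^ 2

theorem exists_ne_zero_and_eval_radicand_ne_zero {K : Type*} [Field K] [CharZero K] (ℓ ν : K) :
    ∃ a : K, a ≠ 0 ∧ (radicand ℓ ν).eval a ≠ 0 := by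
  have hT : radicand ℓ ν ≠ 0 := ne_zero_of_natDegree_gt (n := 0) (p := radicand ℓ ν) (by
    rw [show (radicand ℓ ν).natDegree = 2 by unfold radicand; compute_degree!]; norm_num)
  by_contra! h
  refine mul_ne_zero X_ne_zero hT (Polynomial.funext fun a => ?_)
  by_cases ha : a = 0 <;> simp [ha, h]

theorem LinearMap.trace_eq_zero_of_mul_eq_neg_mul {K V : Type*} [Field K] [NeZero (2 : K)]
    [AddCommGroup V] [Module K V] [FiniteDimensional K V] {f g : Module.End K V}
    (hg : IsUnit g) (h : g * f = -(f * g)) : LinearMap.trace K V f = 0 := by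
  obtain ⟨u, rfl⟩ := hg
  have hconj : (u : Module.End K V) * f * ↑u⁻¹ = -f := by
    rw [h, neg_mul, mul_assoc, Units.mul_inv, mul_one]
  have := LinearMap.trace_conj K f u
  rw [hconj, map_neg, neg_eq_iff_add_eq_zero, ← two_mul] at this
  exact (mul_eq_zero.mp this).resolve_left two_ne_zero

section SkewLmul
variable {K A : Type*} [CommRing K] [CommRing A] [Algebra K A] (τ : A →ₐ[K] A)

def skewLmul (a b : A) : Module.End K A :=
  Algebra.lmul K A a + Algebra.lmul K A b * τ.toLinearMap

variable {τ}

@[simp]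
theorem skewLmul_zero_right (a : A) : skewLmul τ a 0 = Algebra.lmul K A a := by
  simp [skewLmul]

theorem skewLmul_add_skewLmul (a b c d : A) :
    skewLmul τ a b + skewLmul τ c d = skewLmul τ (a + c) (b + d) := by
  simp only [skewLmul, map_add, add_mul]
  abel

theorem skewLmul_mul_skewLmul (hτ : Function.Involutive τ) (a b c d : A) :
    skewLmul τ a b * skewLmul τ c d = skewLmul τ (a * c + b * τ d) (a * d + b * τ c) := by
  ext z
  simp [skewLmul, hτ z]
  ring

end SkewLmul

section Involution
variable {K A : Type*} [Field K] [NeZero (2 : K)] [CommRing A] [Algebra K A] [Module.Finite K A]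
  {τ : A →ₐ[K] A}

theorem trace_skewLmul (hτ : Function.Involutive τ) {x : A} (hx : IsUnit x) (hτx : τ x = -x)
    {a : A} (hτa : τ a = -a) (b : A) : LinearMap.trace K A (skewLmul τ a b) = 0 := by
  have hττ : τ.toLinearMap * τ.toLinearMap = 1 := LinearMap.ext hτ
  have ha : LinearMap.trace K A (Algebra.lmul K A a) = 0 := by
    refine LinearMap.trace_eq_zero_of_mul_eq_neg_mul (Units.mk _ _ hττ hττ).isUnit ?_
    ext w
    simp [hτa]
  have hb : LinearMap.trace K A (Algebra.lmul K A b * τ.toLinearMap) = 0 := by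
    refine LinearMap.trace_eq_zero_of_mul_eq_neg_mul (hx.map (Algebra.lmul K A)) ?_
    ext w
    simp [hτx]
    ring
  rw [skewLmul, map_add, ha, hb, add_zero]

theorem exists_end_of_involution (hτ : Function.Involutive τ) {x y r : A} {ℓ ν : K}
    (hxy : x * y = 1) (hτx : τ x = -x) (hτr : τ r = r)
    (hr : x ^ 2 * r ^ 2 = aeval (x ^ 2) (radicand ℓ ν)) :
    ∃ Y : Module.End K A, LinearMap.trace K A (Algebra.lmul K A x) = 0 ∧
      LinearMap.trace K A Y = 0 ∧
      Algebra.lmul K A x * Y + Y * Algebra.lmul K A x = ℓ • 1 ∧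
      (Y - (1 / 2 : K) • Algebra.lmul K A x) ^ 2 = ν • 1 := by
  have hx : IsUnit x := .of_mul_eq_one y hxy
  have hτy : τ y = -y := by
    have : τ x * τ y = 1 := by rw [← map_mul, hxy, map_one]
    linear_combination (-y) * this + (y * τ y) * hτx - (τ y) * hxy
  set l := algebraMap K A (ℓ / 2)
  set h := algebraMap K A (1 / 2)
  have hw : (l * y - h * x) ^ 2 + r ^ 2 = algebraMap K A ν := by
    simp only [radicand, map_sub, map_mul, map_pow, aeval_X, aeval_C] at hr
    refine (hx.pow 2).mul_left_cancel ?_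
    linear_combination hr + l * (l * x * y + l - 2 * h * x ^ 2) * hxy
  have hτq : τ (l * y) = -(l * y) := by simp [l, hτy]
  have hτw : τ (l * y - h * x) = -(l * y - h * x) := by simp [l, h, hτx, hτy]; ring
  have h2l : 2 * l = algebraMap K A ℓ := by
    rw [← map_ofNat (algebraMap K A) 2, ← map_mul, mul_div_cancel₀ _ two_ne_zero]
  refine ⟨skewLmul τ (l * y) r, by simpa using trace_skewLmul hτ hx hτx hτx 0,
    trace_skewLmul hτ hx hτx hτq r, ?_, ?_⟩
  · rw [← skewLmul_zero_right (τ := τ), skewLmul_mul_skewLmul hτ, skewLmul_mul_skewLmul hτ,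
      skewLmul_add_skewLmul]
    convert skewLmul_zero_right (τ := τ) (algebraMap K A ℓ) using 2
    · rw [map_zero]
      linear_combination (2 * l) * hxy + h2l
    · rw [hτx]; ring
    · rw [AlgHom.commutes, Algebra.algebraMap_eq_smul_one]
  · have hZ : skewLmul τ (l * y) r - (1 / 2 : K) • Algebra.lmul K A x =
        skewLmul τ (l * y - h * x) r := by
      rw [skewLmul, skewLmul, ← map_smul, Algebra.smul_def, map_sub]
      abel
    rw [hZ, sq, skewLmul_mul_skewLmul hτ, hτw, hτr]
    convert skewLmul_zero_right (τ := τ) (algebraMap K A ν) using 2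
    · rw [← hw]; ring
    · ring
    · rw [AlgHom.commutes, Algebra.algebraMap_eq_smul_one]

end Involution

namespace AdjoinRoot
variable {R : Type*} [CommRing R]

theorem isUnit_root_of_isUnit_coeff_zero {f : R[X]} (hf : IsUnit (f.coeff 0)) :
    IsUnit (root f) := by
  have h : root f * mk f f.divX = -of f (f.coeff 0) := by
    have := congrArg (mk f) (X_mul_divX_add f)
    rw [map_add, map_mul, mk_X, mk_C, mk_self] at this
    exact eq_neg_of_add_eq_zero_left this
  exact isUnit_of_mul_isUnit_left (h ▸ (hf.map (of f)).neg)

section Even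
variable (P : R[X])

theorem aeval_root_sq_eq_zero : aeval (root (P.comp (X ^ 2)) ^ 2) P = 0 := by
  have := aeval_comp (R := R) (x := root (P.comp (X ^ 2))) (p := P) (q := X ^ 2)
  rwa [aeval_eq, mk_self, map_pow, aeval_X, eq_comm] at this

noncomputable def negRoot : AdjoinRoot (P.comp (X ^ 2)) →ₐ[R] AdjoinRoot (P.comp (X ^ 2)) :=
  liftAlgHom _ (Algebra.ofId R _) (-root _) (by
    rw [Algebra.toRingHom_ofId, ← aeval_def, aeval_comp, map_pow, aeval_X, neg_sq]
    exact aeval_root_sq_eq_zero P)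

@[simp]
theorem negRoot_root : negRoot P (root _) = -root _ := liftAlgHom_root ..

theorem negRoot_involutive : Function.Involutive (negRoot P) :=
  DFunLike.congr_fun (algHom_ext (by simp) : (negRoot P).comp (negRoot P) = AlgHom.id R _)

theorem negRoot_aeval_root_sq (f : R[X]) :
    negRoot P (aeval (root (P.comp (X ^ 2)) ^ 2) f) = aeval (root (P.comp (X ^ 2)) ^ 2) f := by
  rw [← aeval_algHom_apply, map_pow, negRoot_root, neg_sq]

end Even

theorem exists_end_of_dvd {K : Type*} [Field K] [NeZero (2 : K)] {P ρ : K[X]}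
    (hP : P.Monic) (hP0 : P.coeff 0 ≠ 0) {ℓ ν : K} (hρ : P ∣ X * ρ ^ 2 - radicand ℓ ν) :
    ∃ Y : Module.End K (AdjoinRoot (P.comp (X ^ 2))),
      LinearMap.trace K _ (Algebra.lmul K _ (root (P.comp (X ^ 2)))) = 0 ∧
      LinearMap.trace K _ Y = 0 ∧
      Algebra.lmul K _ (root _) * Y + Y * Algebra.lmul K _ (root _) = ℓ • 1 ∧
      (Y - (1 / 2 : K) • Algebra.lmul K _ (root _)) ^ 2 = ν • 1 := by
  have := (hP.comp (monic_X_pow 2) (by simp)).finite_adjoinRoot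
  set x := root (P.comp (X ^ 2))
  have hx : IsUnit x := isUnit_root_of_isUnit_coeff_zero (by
    simpa [coeff_zero_eq_eval_zero, eval_comp] using hP0)
  obtain ⟨y, hxy⟩ := hx.exists_right_inv
  have hr : x ^ 2 * aeval (x ^ 2) ρ ^ 2 = aeval (x ^ 2) (radicand ℓ ν) := by
    obtain ⟨k, hk⟩ := hρ
    have hPx : aeval (x ^ 2) P = 0 := aeval_root_sq_eq_zero P
    have := congrArg (aeval (x ^ 2)) hk
    rwa [map_mul, hPx, zero_mul, map_sub, map_mul, map_pow, aeval_X, sub_eq_zero] at this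
  exact exists_end_of_involution (negRoot_involutive P) hxy (negRoot_root P)
    (negRoot_aeval_root_sq P ρ) hr

end AdjoinRoot

theorem isCompanionForm_leftMulMatrix {n : ℕ} {A : Type*} [CommRing A] [Algebra ℂ A]
    (b : Module.Basis (Fin n) ℂ A) {x : A} (hb : ∀ j, b j = x ^ (j : ℕ)) :
    IsCompanionForm (Algebra.leftMulMatrix b x) := by
  intro i j hj
  rw [Algebra.leftMulMatrix_eq_repr_mul, hb, ← pow_succ', ← hb ⟨j + 1, hj⟩, b.repr_self,
    Finsupp.single_apply]
  simp [Fin.ext_iff, eq_comm]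

theorem exists_matrix_of_end {n : ℕ} {A : Type*} [CommRing A] [Algebra ℂ A]
    (b : Module.Basis (Fin n) ℂ A) {x : A} (hb : ∀ j, b j = x ^ (j : ℕ)) {ℓ ν : ℂ}
    {Y : Module.End ℂ A} (hS : LinearMap.trace ℂ A (Algebra.lmul ℂ A x) = 0)
    (hY : LinearMap.trace ℂ A Y = 0)
    (hSY : Algebra.lmul ℂ A x * Y + Y * Algebra.lmul ℂ A x = ℓ • 1)
    (hZ : (Y - (1 / 2 : ℂ) • Algebra.lmul ℂ A x) ^ 2 = ν • 1) :
    ∃ S Y : Matrix (Fin n) (Fin n) ℂ, IsCompanionForm S ∧ S.trace = 0 ∧ Y.trace = 0 ∧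
      S * Y + Y * S = ℓ • 1 ∧ (Y - (1 / 2 : ℂ) • S) ^ 2 = ν • 1 := by
  let e := LinearMap.toMatrixAlgEquiv b
  refine ⟨e (Algebra.lmul ℂ A x), e Y, isCompanionForm_leftMulMatrix b hb, ?_, ?_, ?_, ?_⟩
  · rwa [LinearMap.trace_eq_matrix_trace ℂ b] at hS
  · rwa [LinearMap.trace_eq_matrix_trace ℂ b] at hY
  · simpa using congrArg e hSY
  · simpa using congrArg e hZ

theorem D2m_nonempty_general (m : ℕ) (μ₁ μ₂ : ℂ) :
    ∃ S Y : Matrix (Fin (2 * m)) (Fin (2 * m)) ℂ,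
      IsCompanionForm S ∧ S.trace = 0 ∧ Y.trace = 0 ∧
      S * Y + Y * S = (μ₁^2 - μ₂^2) • 1 ∧
      (Y - (1/2 : ℂ) • S) ^ 2 = μ₂^2 • 1 := by
  set T := radicand (μ₁ ^ 2 - μ₂ ^ 2) (μ₂ ^ 2)
  obtain ⟨a, ha, hTa⟩ := exists_ne_zero_and_eval_radicand_ne_zero (μ₁ ^ 2 - μ₂ ^ 2) (μ₂ ^ 2)
  obtain ⟨c, hc⟩ := IsAlgClosed.exists_pow_nat_eq (T.eval a / a) two_pos
  obtain ⟨ρ, -, hρ⟩ := exists_X_sub_C_pow_dvd_mul_sq_sub (F := T) (G := X) (a := a)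
    (by rwa [eval_X]) (ne_zero_pow two_ne_zero (hc ▸ div_ne_zero hTa ha))
    (by rw [hc, eval_X, mul_div_cancel₀ _ ha]) m
  have hP : ((X - C a) ^ m).Monic := (monic_X_sub_C a).pow m
  have hP0 : ((X - C a) ^ m).coeff 0 ≠ 0 := by simp [coeff_zero_eq_eval_zero, ha]
  obtain ⟨Y, hS, hY, hSY, hZ⟩ :=
    AdjoinRoot.exists_end_of_dvd hP hP0 ((pow_dvd_pow _ m.le_succ).trans hρ)
  have hdeg : (((X - C a) ^ m).comp (X ^ 2)).natDegree = 2 * m := by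
    simp [mul_comm]
  exact exists_matrix_of_end
    ((AdjoinRoot.powerBasis' (hP.comp (monic_X_pow 2) (by simp))).basis.reindex (finCongr hdeg))
    (fun j => by simp [finCongr]) hS hY hSY hZ

/-- for every `m ≥ 1` and `μ₁, μ₂ ≠ 0` the set `D_{2,m}(μ₁,μ₂)` is nonempty. -/
theorem D2m_nonempty (m : ℕ) (hm : 1 ≤ m) (μ₁ μ₂ : ℂ) (h₁ : μ₁ ≠ 0) (h₂ : μ₂ ≠ 0) :
    ∃ S Y : Matrix (Fin (2 * m)) (Fin (2 * m)) ℂ,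
      IsCompanionForm S ∧ S.trace = 0 ∧ Y.trace = 0 ∧
      S * Y + Y * S = (μ₁^2 - μ₂^2) • 1 ∧
      (Y - (1/2 : ℂ) • S) ^ 2 = μ₂^2 • 1 :=
  D2m_nonempty_general m μ₁ μ₂
end
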